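/- Let 𝕜 be ℝ or ℂ, m₁ < m₂ < ⋯ < m_r < m positive integers, F an m-dimensional inner product space over 𝕜 with orthonormal basis (f₁,…,f_m), σ = (σ₁,…,σ_r) with each σ_k an elementary Schubert symbol of type (m_k,m_{k+1}) (m_{r+1} = m), and φ : ∏_{k=1}^{r−1} V(m_k,m_{k+1}) × V(m_r,F) → V(m₁,F) the composition map (u₁,…,u_r) ↦ u_r⋯u₂u₁. Then (1) φ maps ∏_{k=1}^{r−1} V_{σ_k}(m_k,m_{k+1}) × V_{σ_r}(m_r,F) into V_{σ_r⋯σ₂σ₁}(m₁,F); and (2) φ maps ∂V_{σ₁}(m₁,m₂) × ∏_{k=2}^{r−1} V_{σ_k}(m_k,m_{k+1}) × V_{σ_r}(m_r,F) into ∂V_{σ_r⋯σ₂σ₁}(m₁,F). -/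

import Mathlib

open scoped InnerProductSpace

noncomputable section

/-- `e` is an open cell in `X` with characteristic map `f : Dⁿ → X`:
`f` is continuous on the closed unit ball, and restricts to a homeomorphism
(i.e. an embedding) of the open unit ball onto `e`. -/
def IsCellMap {X : Type*} [TopologicalSpace X] {n : ℕ}
    (f : EuclideanSpace ℝ (Fin n) → X) (e : Set X) : Prop :=
  ContinuousOn f (Metric.closedBall 0 1) ∧
  Topology.IsEmbedding ((Metric.ball (0 : EuclideanSpace ℝ (Fin n)) 1).restrict f) ∧
  f '' Metric.ball 0 1 = e

/-- `e` is an open cell of dimension `n` in `X`. -/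
def IsOpenCell {X : Type*} [TopologicalSpace X] (e : Set X) (n : ℕ) : Prop :=
  ∃ f : EuclideanSpace ℝ (Fin n) → X, IsCellMap f e

/-- The Stiefel manifold of inner-product-preserving linear maps `𝕜ⁿ → N`,
topologized as a subspace of the normed space of continuous linear maps. -/
abbrev Stiefel (𝕜 : Type*) [RCLike 𝕜] (n : ℕ) (N : Type*) [NormedAddCommGroup N]
    [InnerProductSpace 𝕜 N] : Type _ :=
  { u : EuclideanSpace 𝕜 (Fin n) →L[𝕜] N // ∀ x y, (inner 𝕜 (u x) (u y) : 𝕜) = inner 𝕜 x y }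

variable (𝕜 : Type*) [RCLike 𝕜]

/-- `E_k`: the span of the first `k+1` standard basis vectors (`0`-based index `k`). -/
def Ek (n : ℕ) (k : Fin n) : Submodule 𝕜 (EuclideanSpace 𝕜 (Fin n)) :=
  Submodule.span 𝕜 {x | ∃ i : Fin n, i ≤ k ∧ x = EuclideanSpace.single i (1 : 𝕜)}

/-- The Schubert cell `V_σ(n,N)` in the Stiefel manifold, relative to the orthonormal
basis `b` of `N`. -/
def VCell {n m : ℕ} {N : Type*} [NormedAddCommGroup N] [InnerProductSpace 𝕜 N]
    (b : OrthonormalBasis (Fin m) 𝕜 N) (σ : Fin n → Fin m) : Set (Stiefel 𝕜 n N) :=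
  { u | ∀ k : Fin n,
      (∀ x ∈ Ek 𝕜 n k, u.1 x ∈ Submodule.span 𝕜 (⇑b '' {j : Fin m | j ≤ σ k})) ∧
      ∃ r : ℝ, 0 < r ∧ (inner 𝕜 (u.1 (EuclideanSpace.single k (1 : 𝕜))) (b (σ k)) : 𝕜) = (r : 𝕜) }

/-- The dimension `d(σ) = Σₖ (σ(k) - k)` of an elementary Schubert symbol. -/
def dSigma {n m : ℕ} (σ : Fin n → Fin m) : ℕ := ∑ k : Fin n, ((σ k : ℕ) - (k : ℕ))

/-- The equivalence relation on `V(n,H)` identifying maps with the same image. -/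
def grassmannSetoid (n : ℕ) (H : Type*) [NormedAddCommGroup H] [InnerProductSpace 𝕜 H] :
    Setoid (Stiefel 𝕜 n H) :=
  ⟨fun u v => LinearMap.range ((u.1 : EuclideanSpace 𝕜 (Fin n) →L[𝕜] H) : EuclideanSpace 𝕜 (Fin n) →ₗ[𝕜] H) =
    LinearMap.range (v.1 : EuclideanSpace 𝕜 (Fin n) →ₗ[𝕜] H),
   ⟨fun _ => rfl, Eq.symm, Eq.trans⟩⟩

/-- The Grassmann manifold `G(n,H)` with the quotient topology. -/
abbrev Grassmann (n : ℕ) (H : Type*) [NormedAddCommGroup H] [InnerProductSpace 𝕜 H] : Type _ :=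
  Quotient (grassmannSetoid 𝕜 n H)

/-- A point of `G(n,H)` as an `n`-dimensional subspace of `H`. -/
def Grassmann.rangeOf {n : ℕ} {H : Type*} [NormedAddCommGroup H] [InnerProductSpace 𝕜 H] :
    Grassmann 𝕜 n H → Submodule 𝕜 H :=
  Quotient.lift (fun u => LinearMap.range (u.1 : EuclideanSpace 𝕜 (Fin n) →ₗ[𝕜] H)) (fun _ _ h => h)

/-- The (1-based) Schubert symbol `σ_X(k) = min { i : dim (X ∩ F i) ≥ k }` of a
subspace `X` relative to a flag `F`. -/
def schubertSigma {K W : Type*} [Ring K] [AddCommGroup W] [Module K W]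
    (X : Submodule K W) (F : ℕ → Submodule K W) (k : ℕ) : ℕ :=
  sInf {i : ℕ | k ≤ Module.finrank K ↥(X ⊓ F i)}

/-- The complete flag associated to an (ordered) orthonormal basis:
`basisFlag b i = span(b₁, …, b_i)` (1-based `i`). -/
def basisFlag {m : ℕ} {N : Type*} [NormedAddCommGroup N] [InnerProductSpace 𝕜 N]
    (b : OrthonormalBasis (Fin m) 𝕜 N) (i : ℕ) : Submodule 𝕜 N :=
  Submodule.span 𝕜 (⇑b '' {j : Fin m | (j : ℕ) < i})

/-- The Schubert cell `G_σ(n,H)` inside the Grassmannian of `n`-dimensional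
subspaces of `H`, viewed as a set of submodules. -/
def GCellSub {n m : ℕ} {H : Type*} [NormedAddCommGroup H] [InnerProductSpace 𝕜 H]
    (b : OrthonormalBasis (Fin m) 𝕜 H) (σ : Fin n → Fin m) : Set (Submodule 𝕜 H) :=
  { X | Module.finrank 𝕜 ↥X = n ∧
        ∀ k : Fin n, schubertSigma X (basisFlag 𝕜 b) ((k : ℕ) + 1) = (σ k : ℕ) + 1 }

/-- The Schubert cell `G_σ(n,H)` as a subset of the Grassmann manifold. -/
def GCell {n m : ℕ} {H : Type*} [NormedAddCommGroup H] [InnerProductSpace 𝕜 H]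
    (b : OrthonormalBasis (Fin m) 𝕜 H) (σ : Fin n → Fin m) : Set (Grassmann 𝕜 n H) :=
  { x | ∀ k : Fin n,
      schubertSigma (Grassmann.rangeOf 𝕜 x) (basisFlag 𝕜 b) ((k : ℕ) + 1) = (σ k : ℕ) + 1 }

/-- Composition of inner-product-preserving maps. -/
def scomp {n q : ℕ} {N : Type*} [NormedAddCommGroup N] [InnerProductSpace 𝕜 N]
    (v : Stiefel 𝕜 q N) (u : Stiefel 𝕜 n (EuclideanSpace 𝕜 (Fin q))) : Stiefel 𝕜 n N :=
  ⟨v.1.comp u.1, fun x y => by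
    simp only [ContinuousLinearMap.comp_apply]
    rw [v.2, u.2]⟩

/-- The identity as an inner-product-preserving map. -/
def sid (n : ℕ) : Stiefel 𝕜 n (EuclideanSpace 𝕜 (Fin n)) :=
  ⟨ContinuousLinearMap.id 𝕜 _, fun _ _ => rfl⟩


section Chains

variable (𝕜 : Type*) [RCLike 𝕜]

/-- Iterated composition `u_{j-1} ∘ ⋯ ∘ u_1 ∘ u_0` of a chain of
inner-product-preserving maps (`0`-based). -/
def chainComp (m : ℕ → ℕ)
    (u : ∀ i : ℕ, Stiefel 𝕜 (m i) (EuclideanSpace 𝕜 (Fin (m (i+1))))) :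
    (j : ℕ) → Stiefel 𝕜 (m 0) (EuclideanSpace 𝕜 (Fin (m j)))
  | 0 => sid 𝕜 (m 0)
  | (j+1) => scomp 𝕜 (u j) (chainComp m u j)

/-- Iterated composition `τ_{j-1} ∘ ⋯ ∘ τ_1 ∘ τ_0` of a chain of Schubert symbols. -/
def symbComp (m : ℕ → ℕ) (τ : ∀ i : ℕ, Fin (m i) → Fin (m (i+1))) :
    (j : ℕ) → Fin (m 0) → Fin (m j)
  | 0 => id
  | (j+1) => τ j ∘ symbComp m τ j

end Chains

section Flags

variable (𝕜 : Type*) [RCLike 𝕜]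

/-- The generalized Stiefel manifold `V(n₁,…,n_q,H)` (with `q = Q+1`,
`nn k = n_{k+1}` 0-based): tuples of isometric embeddings with nested images. -/
abbrev FlagStiefel (nn : ℕ → ℕ) (Q : ℕ) (H : Type*) [NormedAddCommGroup H]
    [InnerProductSpace 𝕜 H] : Type _ :=
  { v : ∀ k : Fin (Q+1), Stiefel 𝕜 (nn k.1) H //
      ∀ k l : Fin (Q+1), k ≤ l → LinearMap.range ((v k).1 : EuclideanSpace 𝕜 (Fin (nn k.1)) →ₗ[𝕜] H) ≤
        LinearMap.range ((v l).1 : EuclideanSpace 𝕜 (Fin (nn l.1)) →ₗ[𝕜] H) }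

/-- A general Schubert symbol of type `(n₁,…,n_q, n)` (with `q = Q+1`,
`nn k = n_{k+1}` 0-based and `nn (Q+1) = n`). -/
abbrev SymbolFamily (nn : ℕ → ℕ) (Q : ℕ) : Type _ :=
  ∀ k : Fin (Q+1), Fin (nn k.1) → Fin (nn (k.1+1))

/-- The dimension `d(σ) = Σ_k Σ_i (σ_k(i) − i)` of a general Schubert symbol. -/
def dGen {nn : ℕ → ℕ} {Q : ℕ} (σ : SymbolFamily nn Q) : ℕ :=
  ∑ k : Fin (Q+1), ∑ i : Fin (nn k.1), ((σ k i : ℕ) - (i : ℕ))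

/-- The cell `V_σ(n₁,…,n_q,H)`: the image under the composition homeomorphism `ψ`
of the product of the cells `V_{σ_k}(n_k, n_{k+1})` and `V_{σ_q}(n_q, H)`. -/
def GenVCell (nn : ℕ → ℕ) (Q : ℕ) {H : Type*} [NormedAddCommGroup H]
    [InnerProductSpace 𝕜 H] (b : OrthonormalBasis (Fin (nn (Q+1))) 𝕜 H)
    (σ : SymbolFamily nn Q) : Set (FlagStiefel 𝕜 nn Q H) :=
  { v | v.1 (Fin.last Q) ∈ VCell 𝕜 b (σ (Fin.last Q)) ∧
      ∃ u : ∀ k : ℕ, Stiefel 𝕜 (nn k) (EuclideanSpace 𝕜 (Fin (nn (k+1)))),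
        (∀ (k : ℕ) (h : k < Q),
            u k ∈ VCell 𝕜 (EuclideanSpace.basisFun (Fin (nn (k+1))) 𝕜)
              (σ ⟨k, Nat.lt_succ_of_lt h⟩)) ∧
        ∀ (k : ℕ) (h : k < Q),
          v.1 ⟨k, Nat.lt_succ_of_lt h⟩ = scomp 𝕜 (v.1 ⟨k+1, Nat.succ_lt_succ h⟩) (u k) }

/-- The flag manifold `G(n₁,…,n_q,H)` as a subspace of the product of Grassmannians. -/
abbrev FlagManifold (nn : ℕ → ℕ) (Q : ℕ) (H : Type*) [NormedAddCommGroup H]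
    [InnerProductSpace 𝕜 H] : Type _ :=
  { x : ∀ k : Fin (Q+1), Grassmann 𝕜 (nn k.1) H //
      ∀ k l : Fin (Q+1), k ≤ l → Grassmann.rangeOf 𝕜 (x k) ≤ Grassmann.rangeOf 𝕜 (x l) }

/-- The quotient map `p(n₁,…,n_q,H) : V(n₁,…,n_q,H) → G(n₁,…,n_q,H)`. -/
def flagQuot (nn : ℕ → ℕ) (Q : ℕ) {H : Type*} [NormedAddCommGroup H]
    [InnerProductSpace 𝕜 H] (v : FlagStiefel 𝕜 nn Q H) : FlagManifold 𝕜 nn Q H :=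
  ⟨fun k => Quotient.mk (grassmannSetoid 𝕜 (nn k.1) H) (v.1 k), fun k l h => v.2 k l h⟩

end Flags

section Induced

variable {K W : Type*} [Ring K] [AddCommGroup W] [Module K W]

/-- Iterated induced flags: `indFlag Q F0 Xn 0 = F0` is the complete flag on the
ambient space, and `indFlag Q F0 Xn (j+1)` is the complete flag induced on
`Xn (Q-j)` by the flag `indFlag Q F0 Xn j` on the next space. -/
def indFlag (Q : ℕ) (F0 : ℕ → Submodule K W) (Xn : ℕ → Submodule K W) :
    ℕ → ℕ → Submodule K W
  | 0 => F0
  | (j+1) => fun i =>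
      Xn (Q - j) ⊓ indFlag Q F0 Xn j (schubertSigma (Xn (Q - j)) (indFlag Q F0 Xn j) i)

/-- The `k`-th component of the Schubert symbol of the flag `Xn`: the Schubert symbol of
`Xn k` inside the completely flagged space `Xn (k+1)` (the ambient space when `k = Q`). -/
def flagSymbol (Q : ℕ) (F0 : ℕ → Submodule K W) (Xn : ℕ → Submodule K W) (k i : ℕ) : ℕ :=
  schubertSigma (Xn k) (indFlag Q F0 Xn (Q - k)) i

end Induced

section FlagCells

variable (𝕜 : Type*) [RCLike 𝕜]

/-- A tuple of submodules, extended by `⊤` (the ambient space) beyond index `Q`. -/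
def tupleExt {Q : ℕ} {H : Type*} [NormedAddCommGroup H] [InnerProductSpace 𝕜 H]
    (Xt : ∀ _ : Fin (Q+1), Submodule 𝕜 H) (j : ℕ) : Submodule 𝕜 H :=
  if h : j < Q + 1 then Xt ⟨j, h⟩ else ⊤

/-- The set `G(n₁,…,n_q,H)` of flags, as tuples of submodules. -/
def GFlagSet (nn : ℕ → ℕ) (Q : ℕ) (H : Type*) [NormedAddCommGroup H]
    [InnerProductSpace 𝕜 H] : Set (∀ _ : Fin (Q+1), Submodule 𝕜 H) :=
  { Xt | (∀ k : Fin (Q+1), Module.finrank 𝕜 ↥(Xt k) = nn k.1) ∧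
      ∀ k l : Fin (Q+1), k ≤ l → Xt k ≤ Xt l }

/-- The Schubert cell `G_σ(n₁,…,n_q,H)`, as a set of tuples of submodules. -/
def GFlagCellSub (nn : ℕ → ℕ) (Q : ℕ) {H : Type*} [NormedAddCommGroup H]
    [InnerProductSpace 𝕜 H] (b : OrthonormalBasis (Fin (nn (Q+1))) 𝕜 H)
    (σ : SymbolFamily nn Q) : Set (∀ _ : Fin (Q+1), Submodule 𝕜 H) :=
  { Xt | Xt ∈ GFlagSet 𝕜 nn Q H ∧
      ∀ (k : Fin (Q+1)) (i : Fin (nn k.1)),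
        flagSymbol Q (basisFlag 𝕜 b) (tupleExt 𝕜 Xt) k.1 (i.1+1) = (σ k i : ℕ) + 1 }

/-- The Schubert cell `G_σ(n₁,…,n_q,H)` as a subset of the flag manifold. -/
def GFlagCellQ (nn : ℕ → ℕ) (Q : ℕ) {H : Type*} [NormedAddCommGroup H]
    [InnerProductSpace 𝕜 H] (b : OrthonormalBasis (Fin (nn (Q+1))) 𝕜 H)
    (σ : SymbolFamily nn Q) : Set (FlagManifold 𝕜 nn Q H) :=
  { x | ∀ (k : Fin (Q+1)) (i : Fin (nn k.1)),
      flagSymbol Q (basisFlag 𝕜 b)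
        (tupleExt 𝕜 (fun l => Grassmann.rangeOf 𝕜 (x.1 l))) k.1 (i.1+1) = (σ k i : ℕ) + 1 }

end FlagCells

/-!
If `u` has Schubert symbol `σ` and `v` has Schubert symbol `τ`, then `v ∘ u` maps `E_k` into
`N_{τ(σ(k))}`. Since `τ` is strictly increasing, `v` maps `E_{σ(k)-1}` into
`N_{τ(σ(k)-1)}`, which is orthogonal to `g_{τ(σ(k))}`; hence the diagonal entry
`⟨v (u e_k), g_{τ(σ(k))}⟩` is the product `⟨u e_k, e_{σ(k)}⟩ ⟨v e_{σ(k)}, g_{τ(σ(k))}⟩`.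
So composition maps cells into cells, by continuity closures into closures, and, since a
product of a nonnegative real and a positive real is positive only if the first factor is,
boundary points to boundary points. Both claims follow by induction along the chain.
-/

section SchubertCells

variable {𝕜 : Type*} [RCLike 𝕜] {n mN : ℕ} {N : Type*} [NormedAddCommGroup N]
  [InnerProductSpace 𝕜 N]

lemma Orthonormal.inner_eq_zero_of_mem_span {ι : Type*} {b : ι → N} (hb : Orthonormal 𝕜 b)
    {S : Set ι} {t : ι} (ht : t ∉ S) {y : N} (hy : y ∈ Submodule.span 𝕜 (b '' S)) :
    ⟪y, b t⟫_𝕜 = 0 := by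
  obtain ⟨l, hl, rfl⟩ := (Finsupp.mem_span_image_iff_linearCombination 𝕜).1 hy
  exact hb.inner_finsupp_eq_zero ht hl

/-- Only the `s`-th coordinate of `x` contributes: the earlier `a i` are sent into
`span (b '' Iic (τ i))`, which is orthogonal to `b (τ s)` since `τ i < τ s`. -/
lemma Orthonormal.inner_map_eq_mul_of_mem_span {ι κ M : Type*} [PartialOrder ι] [Preorder κ]
    [NormedAddCommGroup M] [InnerProductSpace 𝕜 M] {a : ι → M} (ha : Orthonormal 𝕜 a)
    {b : κ → N} (hb : Orthonormal 𝕜 b) {τ : ι → κ} (hτ : StrictMono τ) (v : M →L[𝕜] N)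
    {s : ι} (hv : ∀ i < s, v (a i) ∈ Submodule.span 𝕜 (b '' Set.Iic (τ i)))
    {x : M} (hx : x ∈ Submodule.span 𝕜 (a '' Set.Iic s)) :
    ⟪v x, b (τ s)⟫_𝕜 = ⟪x, a s⟫_𝕜 * ⟪v (a s), b (τ s)⟫_𝕜 := by
  classical
  induction hx using Submodule.span_induction with
  | mem y hy =>
    obtain ⟨i, hi, rfl⟩ := hy
    rcases (Set.mem_Iic.1 hi).lt_or_eq with hlt | rfl
    · have hτi : τ s ∉ Set.Iic (τ i) := fun h => (hτ hlt).not_ge h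
      rw [hb.inner_eq_zero_of_mem_span hτi (hv i hlt), orthonormal_iff_ite.1 ha i s,
        if_neg hlt.ne, zero_mul]
    · rw [orthonormal_iff_ite.1 ha, if_pos rfl, one_mul]
  | zero => simp
  | add y z _ _ hy hz => rw [map_add, inner_add_left, inner_add_left, hy, hz, add_mul]
  | smul c y _ hy => rw [map_smul, inner_smul_left, inner_smul_left, hy, mul_assoc]

lemma Ek_eq_span_basisFun (k : Fin n) :
    Ek 𝕜 n k = Submodule.span 𝕜 (EuclideanSpace.basisFun (Fin n) 𝕜 '' Set.Iic k) := by
  simp only [Ek, EuclideanSpace.basisFun_apply]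
  congr 1
  ext x
  simp [eq_comm]

lemma single_mem_Ek {k i : Fin n} (hik : i ≤ k) : EuclideanSpace.single i (1 : 𝕜) ∈ Ek 𝕜 n k :=
  Submodule.subset_span ⟨i, hik, rfl⟩

/-- The paper's closure of `V_σ`: the diagonal entries are only required to be nonnegative. -/
def ClosedVCell (b : OrthonormalBasis (Fin mN) 𝕜 N) (σ : Fin n → Fin mN) :
    Set (Stiefel 𝕜 n N) :=
  { u | ∀ k : Fin n,
      (∀ x ∈ Ek 𝕜 n k, u.1 x ∈ Submodule.span 𝕜 (⇑b '' {j : Fin mN | j ≤ σ k})) ∧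
      ∃ r : ℝ, 0 ≤ r ∧ ⟪u.1 (EuclideanSpace.single k (1 : 𝕜)), b (σ k)⟫_𝕜 = (r : 𝕜) }

lemma VCell_subset_ClosedVCell (b : OrthonormalBasis (Fin mN) 𝕜 N) (σ : Fin n → Fin mN) :
    VCell 𝕜 b σ ⊆ ClosedVCell b σ := fun _ hu k =>
  ⟨(hu k).1, let ⟨r, hr, h⟩ := (hu k).2; ⟨r, hr.le, h⟩⟩

open scoped ComplexOrder in
lemma isClosed_ClosedVCell (b : OrthonormalBasis (Fin mN) 𝕜 N) (σ : Fin n → Fin mN) :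
    IsClosed (ClosedVCell b σ) := by
  have : FiniteDimensional 𝕜 N := b.toBasis.finiteDimensional_of_finite
  have heval (x : EuclideanSpace 𝕜 (Fin n)) : Continuous fun u : Stiefel 𝕜 n N => u.1 x :=
    continuous_subtype_val.clm_apply continuous_const
  have hdiag (k : Fin n) (u : Stiefel 𝕜 n N) :
      (∃ r : ℝ, 0 ≤ r ∧ ⟪u.1 (EuclideanSpace.single k (1 : 𝕜)), b (σ k)⟫_𝕜 = (r : 𝕜)) ↔
        0 ≤ ⟪u.1 (EuclideanSpace.single k (1 : 𝕜)), b (σ k)⟫_𝕜 := by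
    rw [RCLike.nonneg_iff_exists_ofReal]
    exact exists_congr fun r => and_congr Iff.rfl eq_comm
  simp only [ClosedVCell, hdiag, Set.ofPred_forall, Set.ofPred_and]
  refine isClosed_iInter fun k => IsClosed.inter ?_ ?_
  · exact isClosed_iInter fun x => isClosed_iInter fun _ =>
      (Submodule.closed_of_finiteDimensional _).preimage (heval x)
  · exact isClosed_le continuous_const ((heval _).inner continuous_const)

lemma closure_VCell_subset (b : OrthonormalBasis (Fin mN) 𝕜 N) (σ : Fin n → Fin mN) :
    closure (VCell 𝕜 b σ) ⊆ ClosedVCell b σ :=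
  closure_minimal (VCell_subset_ClosedVCell b σ) (isClosed_ClosedVCell b σ)

end SchubertCells

section Composition

variable {𝕜 : Type*} [RCLike 𝕜] {n q mN : ℕ} {N : Type*} [NormedAddCommGroup N]
  [InnerProductSpace 𝕜 N] {b : OrthonormalBasis (Fin mN) 𝕜 N} {σ : Fin n → Fin q}
  {τ : Fin q → Fin mN} {u : Stiefel 𝕜 n (EuclideanSpace 𝕜 (Fin q))} {v : Stiefel 𝕜 q N}

lemma continuous_scomp (v : Stiefel 𝕜 q N) : Continuous (scomp 𝕜 v (n := n)) :=
  (continuous_const.clm_comp continuous_subtype_val).subtype_mk _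

lemma scomp_sid (v : Stiefel 𝕜 n N) : scomp 𝕜 v (sid 𝕜 n) = v :=
  Subtype.ext (ContinuousLinearMap.comp_id _)

lemma sid_mem_VCell (n : ℕ) :
    sid 𝕜 n ∈ VCell 𝕜 (EuclideanSpace.basisFun (Fin n) 𝕜) id := by
  refine fun k => ⟨fun x hx => ?_, 1, one_pos, ?_⟩
  · rwa [Ek_eq_span_basisFun] at hx
  · simp [sid]

lemma scomp_mem_span_of_mem_ClosedVCell
    (hu : u ∈ ClosedVCell (EuclideanSpace.basisFun (Fin q) 𝕜) σ) (hv : v ∈ ClosedVCell b τ)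
    (k : Fin n) :
    ∀ x ∈ Ek 𝕜 n k, (scomp 𝕜 v u).1 x ∈ Submodule.span 𝕜 (⇑b '' {j | j ≤ τ (σ k)}) :=
  fun x hx => (hv (σ k)).1 _ (by rw [Ek_eq_span_basisFun]; exact (hu k).1 x hx)

lemma inner_scomp_single (hτ : StrictMono τ)
    (hu : u ∈ ClosedVCell (EuclideanSpace.basisFun (Fin q) 𝕜) σ) (hv : v ∈ ClosedVCell b τ)
    (k : Fin n) :
    ⟪(scomp 𝕜 v u).1 (EuclideanSpace.single k 1), b (τ (σ k))⟫_𝕜 =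
      ⟪u.1 (EuclideanSpace.single k 1), EuclideanSpace.basisFun (Fin q) 𝕜 (σ k)⟫_𝕜 *
        ⟪v.1 (EuclideanSpace.single (σ k) 1), b (τ (σ k))⟫_𝕜 := by
  have hv' : ∀ i < σ k, v.1 (EuclideanSpace.basisFun (Fin q) 𝕜 i) ∈
      Submodule.span 𝕜 (b '' Set.Iic (τ i)) := fun i _ =>
    (hv i).1 _ (by simpa using single_mem_Ek (𝕜 := 𝕜) le_rfl)
  simpa [scomp] using (EuclideanSpace.basisFun (Fin q) 𝕜).orthonormal.inner_map_eq_mul_of_mem_span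
    b.orthonormal hτ v.1 hv' ((hu k).1 _ (single_mem_Ek le_rfl))

lemma scomp_mem_VCell (hτ : StrictMono τ)
    (hu : u ∈ VCell 𝕜 (EuclideanSpace.basisFun (Fin q) 𝕜) σ) (hv : v ∈ VCell 𝕜 b τ) :
    scomp 𝕜 v u ∈ VCell 𝕜 b (τ ∘ σ) := by
  have hu' := VCell_subset_ClosedVCell _ _ hu
  have hv' := VCell_subset_ClosedVCell _ _ hv
  intro k
  obtain ⟨r₁, hr₁, h₁⟩ := (hu k).2
  obtain ⟨r₂, hr₂, h₂⟩ := (hv (σ k)).2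
  refine ⟨scomp_mem_span_of_mem_ClosedVCell hu' hv' k, r₁ * r₂, mul_pos hr₁ hr₂, ?_⟩
  rw [Function.comp_apply, inner_scomp_single hτ hu' hv', h₁, h₂, RCLike.ofReal_mul]

lemma mem_VCell_of_scomp_mem_VCell (hτ : StrictMono τ)
    (hu : u ∈ ClosedVCell (EuclideanSpace.basisFun (Fin q) 𝕜) σ) (hv : v ∈ VCell 𝕜 b τ)
    (h : scomp 𝕜 v u ∈ VCell 𝕜 b (τ ∘ σ)) :
    u ∈ VCell 𝕜 (EuclideanSpace.basisFun (Fin q) 𝕜) σ := by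
  intro k
  obtain ⟨r₁, hr₁, h₁⟩ := (hu k).2
  obtain ⟨r₂, hr₂, h₂⟩ := (hv (σ k)).2
  obtain ⟨r, hr, h⟩ := (h k).2
  rw [Function.comp_apply, inner_scomp_single hτ hu (VCell_subset_ClosedVCell _ _ hv), h₁, h₂,
    ← RCLike.ofReal_mul, RCLike.ofReal_inj] at h
  exact ⟨(hu k).1, r₁, pos_of_mul_pos_left (h ▸ hr) hr₂.le, h₁⟩

lemma scomp_mem_closure_diff_VCell (hτ : StrictMono τ)
    (hu : u ∈ closure (VCell 𝕜 (EuclideanSpace.basisFun (Fin q) 𝕜) σ) \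
      VCell 𝕜 (EuclideanSpace.basisFun (Fin q) 𝕜) σ)
    (hv : v ∈ VCell 𝕜 b τ) :
    scomp 𝕜 v u ∈ closure (VCell 𝕜 b (τ ∘ σ)) \ VCell 𝕜 b (τ ∘ σ) :=
  ⟨map_mem_closure (continuous_scomp v) hu.1 fun _ hw => scomp_mem_VCell hτ hw hv,
    fun h => hu.2 (mem_VCell_of_scomp_mem_VCell hτ (closure_VCell_subset _ _ hu.1) hv h)⟩

end Composition

section Chains

variable {𝕜 : Type*} [RCLike 𝕜] (m : ℕ → ℕ) (τ : ∀ i : ℕ, Fin (m i) → Fin (m (i + 1)))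
  (u : ∀ i : ℕ, Stiefel 𝕜 (m i) (EuclideanSpace 𝕜 (Fin (m (i + 1)))))

lemma chainComp_mem_VCell (j : ℕ) (hτ : ∀ i < j, StrictMono (τ i))
    (hu : ∀ i < j, u i ∈ VCell 𝕜 (EuclideanSpace.basisFun (Fin (m (i + 1))) 𝕜) (τ i)) :
    chainComp 𝕜 m u j ∈ VCell 𝕜 (EuclideanSpace.basisFun (Fin (m j)) 𝕜) (symbComp m τ j) := by
  induction j with
  | zero => exact sid_mem_VCell (m 0)
  | succ j ih =>
    exact scomp_mem_VCell (hτ j j.lt_succ_self)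
      (ih (fun i hi => hτ i (hi.trans j.lt_succ_self)) fun i hi => hu i (hi.trans j.lt_succ_self))
      (hu j j.lt_succ_self)

lemma chainComp_succ_mem_closure_diff_VCell (j : ℕ) (hτ : ∀ i < j, StrictMono (τ (i + 1)))
    (hu₀ : u 0 ∈ closure (VCell 𝕜 (EuclideanSpace.basisFun (Fin (m 1)) 𝕜) (τ 0)) \
      VCell 𝕜 (EuclideanSpace.basisFun (Fin (m 1)) 𝕜) (τ 0))
    (hu : ∀ i < j, u (i + 1) ∈ VCell 𝕜 (EuclideanSpace.basisFun (Fin (m (i + 2))) 𝕜) (τ (i + 1))) :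
    chainComp 𝕜 m u (j + 1) ∈
      closure (VCell 𝕜 (EuclideanSpace.basisFun (Fin (m (j + 1))) 𝕜) (symbComp m τ (j + 1))) \
        VCell 𝕜 (EuclideanSpace.basisFun (Fin (m (j + 1))) 𝕜) (symbComp m τ (j + 1)) := by
  induction j with
  | zero =>
    rw [chainComp, chainComp, scomp_sid]
    exact hu₀
  | succ j ih =>
    exact scomp_mem_closure_diff_VCell (hτ j j.lt_succ_self)
      (ih (fun i hi => hτ i (hi.trans j.lt_succ_self)) fun i hi => hu i (hi.trans j.lt_succ_self))
      (hu j j.lt_succ_self)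

end Chains

theorem composition_maps_schubert_cells_general
    (𝕜 : Type*) [RCLike 𝕜] (F : Type*) [NormedAddCommGroup F] [InnerProductSpace 𝕜 F]
    {mF : ℕ} (bF : OrthonormalBasis (Fin mF) 𝕜 F)
    (r : ℕ) (m : ℕ → ℕ)
    (τ : ∀ i : ℕ, Fin (m i) → Fin (m (i + 1))) (hτ : ∀ i, i + 1 < r → StrictMono (τ i))
    (τl : Fin (m (r - 1)) → Fin mF) (hτl : StrictMono τl) :
    (∀ (u : ∀ i : ℕ, Stiefel 𝕜 (m i) (EuclideanSpace 𝕜 (Fin (m (i + 1)))))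
        (v : Stiefel 𝕜 (m (r - 1)) F),
      (∀ i, i + 1 < r → u i ∈ VCell 𝕜 (EuclideanSpace.basisFun (Fin (m (i + 1))) 𝕜) (τ i)) →
      v ∈ VCell 𝕜 bF τl →
      scomp 𝕜 v (chainComp 𝕜 m u (r - 1)) ∈ VCell 𝕜 bF (τl ∘ symbComp m τ (r - 1))) ∧
    (2 ≤ r →
      ∀ (u : ∀ i : ℕ, Stiefel 𝕜 (m i) (EuclideanSpace 𝕜 (Fin (m (i + 1)))))
        (v : Stiefel 𝕜 (m (r - 1)) F),
      u 0 ∈ closure (VCell 𝕜 (EuclideanSpace.basisFun (Fin (m 1)) 𝕜) (τ 0)) \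
        VCell 𝕜 (EuclideanSpace.basisFun (Fin (m 1)) 𝕜) (τ 0) →
      (∀ i, 1 ≤ i → i + 1 < r →
        u i ∈ VCell 𝕜 (EuclideanSpace.basisFun (Fin (m (i + 1))) 𝕜) (τ i)) →
      v ∈ VCell 𝕜 bF τl →
      scomp 𝕜 v (chainComp 𝕜 m u (r - 1)) ∈
        closure (VCell 𝕜 bF (τl ∘ symbComp m τ (r - 1))) \
          VCell 𝕜 bF (τl ∘ symbComp m τ (r - 1))) := by
  refine ⟨fun u v hu hv => ?_, fun hr u v hu₀ hu hv => ?_⟩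
  · exact scomp_mem_VCell hτl
      (chainComp_mem_VCell m τ u _ (fun i hi => hτ i (by omega)) fun i hi => hu i (by omega)) hv
  · obtain ⟨j, rfl⟩ : ∃ j, r = j + 2 := ⟨r - 2, by omega⟩
    exact scomp_mem_closure_diff_VCell hτl
      (chainComp_succ_mem_closure_diff_VCell m τ u j (fun i hi => hτ (i + 1) (by omega)) hu₀
        fun i hi => hu (i + 1) (by omega) (by omega)) hv

/-- Lemma 5.2: let `φ : V(m₁,m₂) × ⋯ × V(m_{r-1},m_r) × V(m_r,F) → V(m₁,F)` be the
composition map (here `0`-based: `m 0 = m₁, …, m (r-1) = m_r` and `φ(u,v) = v ∘ u_{r-2} ∘ ⋯ ∘ u_0`).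
Then (1) `φ` maps `∏ V_{σ_k}(m_k,m_{k+1}) × V_{σ_r}(m_r,F)` into `V_{σ_r⋯σ₁}(m₁,F)`;
(2) `φ` maps `∂V_{σ₁}(m₁,m₂) × ∏_{k≥2} V_{σ_k}(m_k,m_{k+1}) × V_{σ_r}(m_r,F)` into
`∂V_{σ_r⋯σ₁}(m₁,F)`. -/
theorem composition_maps_schubert_cells
    (𝕜 : Type*) [RCLike 𝕜] (F : Type*) [NormedAddCommGroup F] [InnerProductSpace 𝕜 F]
    {mF : ℕ} (bF : OrthonormalBasis (Fin mF) 𝕜 F)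
    (r : ℕ) (hr : 1 ≤ r) (m : ℕ → ℕ) (h0 : 0 < m 0)
    (hm : ∀ i, i + 1 < r → m i < m (i + 1)) (hlast : m (r - 1) < mF)
    (τ : ∀ i : ℕ, Fin (m i) → Fin (m (i + 1))) (hτ : ∀ i, i + 1 < r → StrictMono (τ i))
    (τl : Fin (m (r - 1)) → Fin mF) (hτl : StrictMono τl) :
    (∀ (u : ∀ i : ℕ, Stiefel 𝕜 (m i) (EuclideanSpace 𝕜 (Fin (m (i + 1)))))
        (v : Stiefel 𝕜 (m (r - 1)) F),
      (∀ i, i + 1 < r → u i ∈ VCell 𝕜 (EuclideanSpace.basisFun (Fin (m (i + 1))) 𝕜) (τ i)) →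
      v ∈ VCell 𝕜 bF τl →
      scomp 𝕜 v (chainComp 𝕜 m u (r - 1)) ∈ VCell 𝕜 bF (τl ∘ symbComp m τ (r - 1))) ∧
    (2 ≤ r →
      ∀ (u : ∀ i : ℕ, Stiefel 𝕜 (m i) (EuclideanSpace 𝕜 (Fin (m (i + 1)))))
        (v : Stiefel 𝕜 (m (r - 1)) F),
      u 0 ∈ closure (VCell 𝕜 (EuclideanSpace.basisFun (Fin (m 1)) 𝕜) (τ 0)) \
        VCell 𝕜 (EuclideanSpace.basisFun (Fin (m 1)) 𝕜) (τ 0) →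
      (∀ i, 1 ≤ i → i + 1 < r →
        u i ∈ VCell 𝕜 (EuclideanSpace.basisFun (Fin (m (i + 1))) 𝕜) (τ i)) →
      v ∈ VCell 𝕜 bF τl →
      scomp 𝕜 v (chainComp 𝕜 m u (r - 1)) ∈
        closure (VCell 𝕜 bF (τl ∘ symbComp m τ (r - 1))) \
          VCell 𝕜 bF (τl ∘ symbComp m τ (r - 1))) :=
  composition_maps_schubert_cells_general 𝕜 F bF r m τ hτ τl hτl
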